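/- Let G, H be strongly connected finite graphs and Φ: G → H a right-resolving homomorphism. Then all minimal images of Φ have the same cardinality, and for every state I' of G there exists a minimal image U containing I'. -/

import Mathlib

/-- A finite directed multigraph. -/
structure FinGraph where
  V : Type
  E : Type
  [fintV : Fintype V]
  [fintE : Fintype E]
  [decV : DecidableEq V]
  [decE : DecidableEq E]
  src : E → V
  tgt : E → V

attribute [instance] FinGraph.fintV FinGraph.fintE FinGraph.decV FinGraph.decE

/-- A graph homomorphism. -/
structure GHom (G H : FinGraph) where
  eMap : G.E → H.E
  vMap : G.V → H.V
  src_eq : ∀ e, H.src (eMap e) = vMap (G.src e)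
  tgt_eq : ∀ e, H.tgt (eMap e) = vMap (G.tgt e)

def GHom.comp {G K H : FinGraph} (Δ : GHom K H) (Ψ : GHom G K) : GHom G H where
  eMap := Δ.eMap ∘ Ψ.eMap
  vMap := Δ.vMap ∘ Ψ.vMap
  src_eq := fun e => by
    simp only [Function.comp_apply, Δ.src_eq, Ψ.src_eq]
  tgt_eq := fun e => by
    simp only [Function.comp_apply, Δ.tgt_eq, Ψ.tgt_eq]

/-- The restriction of a homomorphism to the outgoing edges of a state. -/
def outMap {G H : FinGraph} (Φ : GHom G H) (I : G.V) :
    {e : G.E // G.src e = I} → {f : H.E // H.src f = Φ.vMap I} :=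
  fun e => ⟨Φ.eMap e.1, (Φ.src_eq e.1).trans (congrArg Φ.vMap e.2)⟩

/-- A right-resolver: a surjective homomorphism restricting to a bijection
on the outgoing edges of each state. -/
def IsRR {G H : FinGraph} (Φ : GHom G H) : Prop :=
  Function.Surjective Φ.vMap ∧ ∀ I : G.V, Function.Bijective (outMap Φ I)

/-- `IsPathFrom H I u`: the edge list `u` is a path in `H` starting at `I`. -/
def IsPathFrom (H : FinGraph) : H.V → List H.E → Prop
  | _, [] => True
  | I, e :: u => H.src e = I ∧ IsPathFrom H (H.tgt e) u

/-- The terminal state of a path starting at `I`. -/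
def pathEnd (H : FinGraph) (I : H.V) (u : List H.E) : H.V :=
  u.foldl (fun _ e => H.tgt e) I

/-- One-step transition: `I · a` is the target of the unique edge at `I`
lifting `a` (when `Φ` is right-resolving and `a` starts at the image of `I`). -/
noncomputable def step {G H : FinGraph} (Φ : GHom G H) (I : G.V) (a : H.E) : G.V :=
  if h : ∃ e : G.E, G.src e = I ∧ Φ.eMap e = a then G.tgt h.choose else I

/-- Transition along a word: `I · u`. -/
noncomputable def transPath {G H : FinGraph} (Φ : GHom G H) (I : G.V) (u : List H.E) : G.V :=
  u.foldl (step Φ) I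

/-- The stability relation of a right-resolver. -/
def Stable {G H : FinGraph} (Φ : GHom G H) (I₁ I₂ : G.V) : Prop :=
  Φ.vMap I₁ = Φ.vMap I₂ ∧
  ∀ u : List H.E, IsPathFrom H (Φ.vMap I₁) u →
    ∃ v : List H.E, IsPathFrom H (pathEnd H (Φ.vMap I₁) u) v ∧
      transPath Φ I₁ (u ++ v) = transPath Φ I₂ (u ++ v)

/-- A right-resolver is synchronizing if each fiber of its state map is a
single stability class. -/
def Synchronizing {G H : FinGraph} (Φ : GHom G H) : Prop :=
  ∀ I₁ I₂ : G.V, Φ.vMap I₁ = Φ.vMap I₂ → Stable Φ I₁ I₂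

/-- The fiber of the state map over a state of the codomain. -/
def fiber {G H : FinGraph} (Φ : GHom G H) (I : H.V) : Set G.V := {J | Φ.vMap J = I}

/-- The image `U · u` of a set of states under transition along a word. -/
noncomputable def setTrans {G H : FinGraph} (Φ : GHom G H) (U : Set G.V)
    (u : List H.E) : Set G.V :=
  (fun J => transPath Φ J u) '' U

/-- A minimal image of a right-resolver. -/
def IsMinImage {G H : FinGraph} (Φ : GHom G H) (U : Set G.V) : Prop :=
  ∃ (I : H.V) (u : List H.E), IsPathFrom H I u ∧ U = setTrans Φ (fiber Φ I) u ∧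
    ∀ v : List H.E, IsPathFrom H (pathEnd H I u) v →
      (setTrans Φ U v).ncard = U.ncard

/-- Strong connectedness: a directed path between every ordered pair of states. -/
def StronglyConnected (G : FinGraph) : Prop :=
  ∀ I J : G.V, ∃ u : List G.E, IsPathFrom G I u ∧ pathEnd G I u = J

/-!
Since `Φ` is right-resolving, every lift of a path `u` from `I` ends over the end of `u`, so
`(∂Φ)⁻¹(I)·u` lies in a single fiber; and applying a word never increases the size of a set of
states. Given two minimal images `U₁, U₂`, strong connectivity of `H` yields a path
from the end of the word defining `U₁` to the start of the one defining `U₂`; following it and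
then that word maps `U₁` into `U₂` without shrinking it, so `|U₁| ≤ |U₂|`.

For the covering statement, take a word `u` from `I = Φ(I')` minimising `|(∂Φ)⁻¹(I)·u|`. Strong
connectivity of `G` gives a path from `I'·u` back to `I'`, whose image `w` in `H` satisfies
`I'·(u w) = I'`; the word `u w` is still minimising, and a minimising word defines a minimal image.
-/

lemma pathEnd_append {H : FinGraph} (I : H.V) (u v : List H.E) :
    pathEnd H I (u ++ v) = pathEnd H (pathEnd H I u) v := by
  simp only [pathEnd, List.foldl_append]

lemma isPathFrom_append {H : FinGraph} {I : H.V} {u v : List H.E} :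
    IsPathFrom H I (u ++ v) ↔ IsPathFrom H I u ∧ IsPathFrom H (pathEnd H I u) v := by
  induction u generalizing I with
  | nil => simp [IsPathFrom, pathEnd]
  | cons a u ih => simp [IsPathFrom, ih, pathEnd, and_assoc]

section Transitions

variable {G H : FinGraph} {Φ : GHom G H}

lemma transPath_append (I : G.V) (u v : List H.E) :
    transPath Φ I (u ++ v) = transPath Φ (transPath Φ I u) v := by
  simp only [transPath, List.foldl_append]

lemma setTrans_append (U : Set G.V) (u v : List H.E) :
    setTrans Φ U (u ++ v) = setTrans Φ (setTrans Φ U u) v := by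
  simp only [setTrans, Set.image_image, transPath_append]

lemma ncard_setTrans_le (U : Set G.V) (u : List H.E) : (setTrans Φ U u).ncard ≤ U.ncard :=
  Set.ncard_image_le (Set.toFinite U)

lemma isPathFrom_map_eMap {J : G.V} {p : List G.E} (hp : IsPathFrom G J p) :
    IsPathFrom H (Φ.vMap J) (p.map Φ.eMap) := by
  induction p generalizing J with
  | nil => trivial
  | cons e p ih =>
    obtain ⟨rfl, hp⟩ := hp
    exact ⟨Φ.src_eq e, Φ.tgt_eq e ▸ ih hp⟩

namespace IsRR

variable (hΦ : IsRR Φ)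
include hΦ

lemma step_src_eMap (e : G.E) : step Φ (G.src e) (Φ.eMap e) = G.tgt e := by
  have h : ∃ e' : G.E, G.src e' = G.src e ∧ Φ.eMap e' = Φ.eMap e := ⟨e, rfl, rfl⟩
  rw [step, dif_pos h]
  have hinj := (hΦ.2 (G.src e)).1
    (a₁ := ⟨h.choose, h.choose_spec.1⟩) (a₂ := ⟨e, rfl⟩) (Subtype.ext h.choose_spec.2)
  exact congrArg (G.tgt ∘ Subtype.val) hinj

lemma vMap_step {I : G.V} {a : H.E} (ha : H.src a = Φ.vMap I) :
    Φ.vMap (step Φ I a) = H.tgt a := by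
  obtain ⟨⟨e, rfl⟩, he⟩ := (hΦ.2 I).2 ⟨a, ha⟩
  obtain rfl : Φ.eMap e = a := congrArg Subtype.val he
  rw [hΦ.step_src_eMap, Φ.tgt_eq]

lemma vMap_transPath {I : G.V} {u : List H.E} (hu : IsPathFrom H (Φ.vMap I) u) :
    Φ.vMap (transPath Φ I u) = pathEnd H (Φ.vMap I) u := by
  induction u generalizing I with
  | nil => rfl
  | cons a u ih =>
    obtain ⟨ha, hu⟩ := hu
    have hstep := hΦ.vMap_step ha
    exact (ih (hstep ▸ hu)).trans (congrArg (pathEnd H · u) hstep)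

lemma transPath_map_eMap {J : G.V} {p : List G.E} (hp : IsPathFrom G J p) :
    transPath Φ J (p.map Φ.eMap) = pathEnd G J p := by
  induction p generalizing J with
  | nil => rfl
  | cons e p ih =>
    obtain ⟨rfl, hp⟩ := hp
    exact (congrArg (transPath Φ · (p.map Φ.eMap)) (hΦ.step_src_eMap e)).trans (ih hp)

lemma setTrans_fiber_subset {I : H.V} {u : List H.E} (hu : IsPathFrom H I u) :
    setTrans Φ (fiber Φ I) u ⊆ fiber Φ (pathEnd H I u) := by
  rintro _ ⟨J, rfl, rfl⟩
  exact hΦ.vMap_transPath hu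

end IsRR

end Transitions

section MinimalImages

variable {G H : FinGraph} {Φ : GHom G H}

lemma IsMinImage.ncard_le (hΦ : IsRR Φ) (hH : StronglyConnected H) {U₁ U₂ : Set G.V}
    (h₁ : IsMinImage Φ U₁) (h₂ : IsMinImage Φ U₂) : U₁.ncard ≤ U₂.ncard := by
  obtain ⟨I₁, u₁, hu₁, rfl, hmin₁⟩ := h₁
  obtain ⟨I₂, u₂, hu₂, rfl, -⟩ := h₂
  obtain ⟨w, hw, hwend⟩ := hH (pathEnd H I₁ u₁) I₂
  have hinto : setTrans Φ (fiber Φ I₁) (u₁ ++ w) ⊆ fiber Φ I₂ := by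
    simpa only [pathEnd_append, hwend] using
      hΦ.setTrans_fiber_subset (isPathFrom_append.mpr ⟨hu₁, hw⟩)
  calc (setTrans Φ (fiber Φ I₁) u₁).ncard
      = (setTrans Φ (setTrans Φ (fiber Φ I₁) u₁) (w ++ u₂)).ncard :=
        (hmin₁ _ (isPathFrom_append.mpr ⟨hw, hwend ▸ hu₂⟩)).symm
    _ = (setTrans Φ (setTrans Φ (fiber Φ I₁) (u₁ ++ w)) u₂).ncard := by
        rw [setTrans_append, setTrans_append]
    _ ≤ (setTrans Φ (fiber Φ I₂) u₂).ncard :=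
        Set.ncard_le_ncard (Set.image_mono hinto) (Set.toFinite _)

lemma exists_isPathFrom_forall_ncard_setTrans_fiber_le (I : H.V) :
    ∃ u, IsPathFrom H I u ∧ ∀ v, IsPathFrom H I v →
      (setTrans Φ (fiber Φ I) u).ncard ≤ (setTrans Φ (fiber Φ I) v).ncard := by
  let f : List H.E → ℕ := fun u => (setTrans Φ (fiber Φ I) u).ncard
  have hne : {u | IsPathFrom H I u}.Nonempty := ⟨[], trivial⟩
  exact ⟨Function.argminOn f _ hne, Function.argminOn_mem f _ hne,
    fun v hv => Function.argminOn_le f _ hv⟩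

lemma isMinImage_of_forall_ncard_le {I : H.V} {u : List H.E} (hu : IsPathFrom H I u)
    (hmin : ∀ v, IsPathFrom H I v →
      (setTrans Φ (fiber Φ I) u).ncard ≤ (setTrans Φ (fiber Φ I) v).ncard) :
    IsMinImage Φ (setTrans Φ (fiber Φ I) u) := by
  refine ⟨I, u, hu, rfl, fun v hv => le_antisymm (ncard_setTrans_le _ v) ?_⟩
  rw [← setTrans_append]
  exact hmin _ (isPathFrom_append.mpr ⟨hu, hv⟩)

lemma exists_isMinImage_mem (hΦ : IsRR Φ) (hG : StronglyConnected G) (I' : G.V) :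
    ∃ U, IsMinImage Φ U ∧ I' ∈ U := by
  obtain ⟨u, hu, hmin⟩ := exists_isPathFrom_forall_ncard_setTrans_fiber_le (Φ := Φ) (Φ.vMap I')
  obtain ⟨p, hp, hpend⟩ := hG (transPath Φ I' u) I'
  have hw : IsPathFrom H (pathEnd H (Φ.vMap I') u) (p.map Φ.eMap) :=
    hΦ.vMap_transPath hu ▸ isPathFrom_map_eMap hp
  have huw : IsPathFrom H (Φ.vMap I') (u ++ p.map Φ.eMap) := isPathFrom_append.mpr ⟨hu, hw⟩
  refine ⟨_, isMinImage_of_forall_ncard_le huw fun v hv => ?_, I', rfl, ?_⟩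
  · rw [setTrans_append]
    exact (ncard_setTrans_le _ _).trans (hmin v hv)
  · show transPath Φ I' (u ++ p.map Φ.eMap) = I'
    rw [transPath_append, hΦ.transPath_map_eMap hp, hpend]

end MinimalImages

/-- in the strongly connected case, all minimal images have the
same cardinality and every state lies in some minimal image. -/
theorem minimal_images_same_card_and_cover {G H : FinGraph} (Φ : GHom G H)
    (hΦ : IsRR Φ) (hG : StronglyConnected G) (hH : StronglyConnected H) :
    (∀ U₁ U₂ : Set G.V, IsMinImage Φ U₁ → IsMinImage Φ U₂ → U₁.ncard = U₂.ncard) ∧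
    (∀ I' : G.V, ∃ U : Set G.V, IsMinImage Φ U ∧ I' ∈ U) :=
  ⟨fun _ _ h₁ h₂ => (h₁.ncard_le hΦ hH h₂).antisymm (h₂.ncard_le hΦ hH h₁),
    exists_isMinImage_mem hΦ hG⟩
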